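/- arXiv:0910.4921 — 2 statements merged into one kernel-verified Lean document; each statement's English description precedes it below -/
import Mathlib

section
/- Let (M,d) be a cone metric space over a real Banach space E with a normal cone P with normal constant K, and let (xₙ) be a sequence in M. Then (xₙ) is a Cauchy sequence (in the cone-metric sense) if and only if ‖d(xₙ, xₘ)‖ → 0 as n, m → ∞. -/
open Filter

/-- `P` is a cone in the real Banach space `E`: nonempty, closed, not `{0}`,
closed under nonnegative linear combinations, and `P ∩ (-P) = {0}`. -/
def IsCone {E : Type*} [NormedAddCommGroup E] [NormedSpace ℝ E] (P : Set E) : Prop :=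
  P.Nonempty ∧ IsClosed P ∧ P ≠ {0} ∧
    (∀ (a b : ℝ), 0 ≤ a → 0 ≤ b → ∀ x ∈ P, ∀ y ∈ P, a • x + b • y ∈ P) ∧
    (∀ x ∈ P, -x ∈ P → x = 0)

/-- The partial order induced by the cone `P`: `x ≤ y` iff `y - x ∈ P`. -/
def ConeLe {E : Type*} [NormedAddCommGroup E] (P : Set E) (x y : E) : Prop :=
  y - x ∈ P

/-- The strict order induced by the cone `P`: `x ≪ y` iff `y - x ∈ interior P`. -/
def ConeLt {E : Type*} [NormedAddCommGroup E] (P : Set E) (x y : E) : Prop :=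
  y - x ∈ interior P

/-- `P` is a normal cone with normal constant `K`:
`K > 0` and `0 ≤ x ≤ y` implies `‖x‖ ≤ K * ‖y‖`. -/
def IsNormalCone {E : Type*} [NormedAddCommGroup E] (P : Set E) (K : ℝ) : Prop :=
  0 < K ∧ ∀ x y : E, ConeLe P 0 x → ConeLe P x y → ‖x‖ ≤ K * ‖y‖

/-- `d` is a cone metric on `M` with respect to the cone `P ⊆ E`. -/
def IsConeMetric {E : Type*} [NormedAddCommGroup E] (P : Set E) {M : Type*}
    (d : M → M → E) : Prop :=
  (∀ x y : M, x ≠ y → ConeLe P 0 (d x y) ∧ d x y ≠ 0) ∧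
  (∀ x y : M, d x y = 0 ↔ x = y) ∧
  (∀ x y : M, d x y = d y x) ∧
  (∀ x y z : M, ConeLe P (d x y) (d x z + d z y))

/-- Convergence of a sequence in a cone metric space:
for every `c` with `0 ≪ c` eventually `d (s n) l ≪ c`. -/
def ConeConverges {E : Type*} [NormedAddCommGroup E] (P : Set E) {M : Type*}
    (d : M → M → E) (s : ℕ → M) (l : M) : Prop :=
  ∀ c : E, ConeLt P 0 c → ∃ n₀ : ℕ, ∀ n ≥ n₀, ConeLt P (d (s n) l) c

/-- Cauchy sequences in a cone metric space. -/
def ConeCauchy {E : Type*} [NormedAddCommGroup E] (P : Set E) {M : Type*}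
    (d : M → M → E) (s : ℕ → M) : Prop :=
  ∀ c : E, ConeLt P 0 c → ∃ n₀ : ℕ, ∀ n ≥ n₀, ∀ m ≥ n₀, ConeLt P (d (s n) (s m)) c

/-- The cone metric space `(M, d)` is complete: every Cauchy sequence converges. -/
def ConeComplete {E : Type*} [NormedAddCommGroup E] (P : Set E) {M : Type*}
    (d : M → M → E) : Prop :=
  ∀ s : ℕ → M, ConeCauchy P d s → ∃ l : M, ConeConverges P d s l

/-- The cone metric space `(M, d)` is sequentially compact:
every sequence has a convergent subsequence. -/
def ConeSeqCompact {E : Type*} [NormedAddCommGroup E] (P : Set E) {M : Type*}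
    (d : M → M → E) : Prop :=
  ∀ s : ℕ → M, ∃ φ : ℕ → ℕ, StrictMono φ ∧ ∃ l : M, ConeConverges P d (fun i => s (φ i)) l

/-- `T : M → M` is continuous for the cone metric `d`: it preserves convergent sequences. -/
def ConeContinuousMap {E : Type*} [NormedAddCommGroup E] (P : Set E) {M : Type*}
    (d : M → M → E) (T : M → M) : Prop :=
  ∀ (s : ℕ → M) (l : M), ConeConverges P d s l → ConeConverges P d (fun n => T (s n)) (T l)

/-- `T` is sequentially convergent: if `(T yₙ)` converges then `(yₙ)` converges. -/
def ConeSeqConvergent {E : Type*} [NormedAddCommGroup E] (P : Set E) {M : Type*}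
    (d : M → M → E) (T : M → M) : Prop :=
  ∀ s : ℕ → M, (∃ l : M, ConeConverges P d (fun n => T (s n)) l) →
    ∃ l : M, ConeConverges P d s l

/-- `T` is subsequentially convergent: if `(T yₙ)` converges then `(yₙ)` has a
convergent subsequence. -/
def ConeSubseqConvergent {E : Type*} [NormedAddCommGroup E] (P : Set E) {M : Type*}
    (d : M → M → E) (T : M → M) : Prop :=
  ∀ s : ℕ → M, (∃ l : M, ConeConverges P d (fun n => T (s n)) l) →
    ∃ φ : ℕ → ℕ, StrictMono φ ∧ ∃ l : M, ConeConverges P d (fun i => s (φ i)) l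

/-!
If `0 ≪ c` then, `interior P` being open, a whole ball around `c` lies in it, so every `x` of norm
below its radius satisfies `x ≪ c`. Conversely, normality gives `‖x‖ ≤ K‖c‖` whenever `0 ≤ x ≪ c`,
and `c` can be taken to be a small positive multiple of an interior point of `P`.
-/

section ConeFacts

variable {E : Type*} [NormedAddCommGroup E] [NormedSpace ℝ E] {P : Set E}

theorem IsCone.smul_mem (hP : IsCone P) {a : ℝ} (ha : 0 ≤ a) {x : E} (hx : x ∈ P) :
    a • x ∈ P := by
  simpa using hP.2.2.2.1 a 0 ha le_rfl x hx x hx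

theorem IsCone.zero_mem (hP : IsCone P) : (0 : E) ∈ P := by
  obtain ⟨x, hx⟩ := hP.1
  simpa using hP.smul_mem le_rfl hx

open scoped Pointwise in
theorem IsCone.smul_mem_interior (hP : IsCone P) {a : ℝ} (ha : 0 < a) {x : E}
    (hx : x ∈ interior P) : a • x ∈ interior P := by
  have hsub : a • P ⊆ P := by
    rintro _ ⟨y, hy, rfl⟩
    exact hP.smul_mem ha.le hy
  have : a • x ∈ a • interior P := Set.smul_mem_smul_set hx
  rw [← interior_smul₀ ha.ne'] at this
  exact interior_mono hsub this

theorem IsCone.exists_zero_coneLt_norm_lt (hP : IsCone P) (hPint : (interior P).Nonempty)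
    {K ε : ℝ} (hK : 0 < K) (hε : 0 < ε) : ∃ c : E, ConeLt P 0 c ∧ K * ‖c‖ < ε := by
  obtain ⟨e, he⟩ := hPint
  have hden : 0 < K * (‖e‖ + 1) := by positivity
  set δ := ε / (K * (‖e‖ + 1)) with hδdef
  have hδ : 0 < δ := div_pos hε hden
  refine ⟨δ • e, by simpa [ConeLt] using hP.smul_mem_interior hδ he, ?_⟩
  calc K * ‖δ • e‖ = ε * (‖e‖ / (‖e‖ + 1)) := by
        rw [norm_smul, Real.norm_of_nonneg hδ.le, hδdef]
        field_simp
    _ < ε * 1 := by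
        gcongr
        rw [div_lt_one (by positivity)]
        linarith
    _ = ε := mul_one ε

end ConeFacts

theorem exists_forall_norm_lt_coneLt {E : Type*} [NormedAddCommGroup E] {P : Set E} {c : E}
    (hc : ConeLt P 0 c) : ∃ r > 0, ∀ x : E, ‖x‖ < r → ConeLt P x c := by
  rw [ConeLt, sub_zero] at hc
  obtain ⟨r, hr, hball⟩ := Metric.isOpen_iff.mp isOpen_interior c hc
  refine ⟨r, hr, fun x hx => hball ?_⟩
  rwa [Metric.mem_ball, dist_eq_norm, sub_sub_cancel_left, norm_neg]

theorem IsNormalCone.norm_le_of_coneLt {E : Type*} [NormedAddCommGroup E] {P : Set E} {K : ℝ}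
    (hK : IsNormalCone P K) {x c : E} (hx : ConeLe P 0 x) (hxc : ConeLt P x c) :
    ‖x‖ ≤ K * ‖c‖ :=
  hK.2 x c hx (interior_subset hxc)

theorem IsConeMetric.zero_coneLe {E : Type*} [NormedAddCommGroup E] [NormedSpace ℝ E]
    {P : Set E} {M : Type*} {d : M → M → E} (hd : IsConeMetric P d) (hP : IsCone P)
    (x y : M) : ConeLe P 0 (d x y) := by
  by_cases h : x = y
  · rw [ConeLe, sub_zero, (hd.2.1 x y).2 h]
    exact hP.zero_mem
  · exact (hd.1 x y h).1

theorem stmt15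
    {E : Type*} [NormedAddCommGroup E] [NormedSpace ℝ E]
    {M : Type*} (P : Set E) (hP : IsCone P) (hPint : (interior P).Nonempty)
    (K : ℝ) (hK : IsNormalCone P K)
    (d : M → M → E) (hd : IsConeMetric P d)
    (s : ℕ → M) :
    ConeCauchy P d s ↔
      ∀ ε : ℝ, 0 < ε → ∃ N : ℕ, ∀ n ≥ N, ∀ m ≥ N, ‖d (s n) (s m)‖ < ε := by
  constructor
  · intro hs ε hε
    obtain ⟨c, hc, hcε⟩ := hP.exists_zero_coneLt_norm_lt hPint hK.1 hε
    obtain ⟨N, hN⟩ := hs c hc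
    exact ⟨N, fun n hn m hm =>
      (hK.norm_le_of_coneLt (hd.zero_coneLe hP _ _) (hN n hn m hm)).trans_lt hcε⟩
  · intro hs c hc
    obtain ⟨r, hr, hrc⟩ := exists_forall_norm_lt_coneLt hc
    obtain ⟨N, hN⟩ := hs r hr
    exact ⟨N, fun n hn m hm => hrc _ (hN n hn m hm)⟩
end

section
/- Let (M,d) be a cone metric space over a real Banach space E with a normal cone P with normal constant K. If (xₙ) and (yₙ) are sequences in M with xₙ → x and yₙ → y (in the cone-metric sense), then d(xₙ, yₙ) → d(x, y) in E, i.e. ‖d(xₙ,yₙ) − d(x,y)‖ → 0 as n → ∞. -/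
open Filter

/-!
By the triangle inequality `-(d(sₙ,x) + d(tₙ,y)) ≤ d(sₙ,tₙ) - d(x,y) ≤ d(sₙ,x) + d(tₙ,y)`,
and normality turns a two-sided bound `-a ≤ u ≤ a` into `‖u‖ ≤ (2K + 1)‖a‖`
(apply it to `0 ≤ a + u ≤ 2a`). Cone convergence forces `‖d(sₙ,x)‖ → 0`, because the
interior of `P` contains points of arbitrarily small norm.
-/

open Topology

namespace IsCone

variable {E : Type*} [NormedAddCommGroup E] [NormedSpace ℝ E] {P : Set E}

theorem zero_mem_s17 (hP : IsCone P) : (0 : E) ∈ P := by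
  obtain ⟨⟨p, hp⟩, -, -, hcomb, -⟩ := hP
  simpa using hcomb 0 0 le_rfl le_rfl p hp p hp

theorem add_mem (hP : IsCone P) {x y : E} (hx : x ∈ P) (hy : y ∈ P) : x + y ∈ P := by
  simpa using hP.2.2.2.1 1 1 zero_le_one zero_le_one x hx y hy

theorem smul_mem_s17 (hP : IsCone P) {r : ℝ} (hr : 0 ≤ r) {x : E} (hx : x ∈ P) : r • x ∈ P := by
  simpa using hP.2.2.2.1 r 0 hr le_rfl x hx x hx

open scoped Pointwise in
theorem smul_mem_interior_s17 (hP : IsCone P) {r : ℝ} (hr : 0 < r) {x : E}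
    (hx : x ∈ interior P) : r • x ∈ interior P := by
  have hsub : r • P ⊆ P := by
    rintro _ ⟨y, hy, rfl⟩
    exact hP.smul_mem_s17 hr.le hy
  have : r • x ∈ interior (r • P) := by
    rw [interior_smul₀ hr.ne']
    exact Set.smul_mem_smul_set hx
  exact interior_mono hsub this

theorem exists_mem_interior_norm_lt (hP : IsCone P) (hPint : (interior P).Nonempty)
    {δ : ℝ} (hδ : 0 < δ) : ∃ c ∈ interior P, ‖c‖ < δ := by
  obtain ⟨c, hc⟩ := hPint
  have hr : 0 < δ / (‖c‖ + 1) := by positivity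
  refine ⟨(δ / (‖c‖ + 1)) • c, hP.smul_mem_interior_s17 hr hc, ?_⟩
  rw [norm_smul, Real.norm_of_nonneg hr.le, div_mul_eq_mul_div, div_lt_iff₀ (by positivity)]
  nlinarith

end IsCone

theorem IsNormalCone.norm_le_of_neg_le_of_le {E : Type*} [NormedAddCommGroup E] {P : Set E}
    {K : ℝ} (hK : IsNormalCone P K) {a u : E} (hlow : ConeLe P (-a) u) (hup : ConeLe P u a) :
    ‖u‖ ≤ (2 * K + 1) * ‖a‖ := by
  have h₀ : ConeLe P 0 (a + u) := by simpa [ConeLe, add_comm] using hlow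
  have h₁ : ConeLe P (a + u) (a + a) := by simpa [ConeLe] using hup
  have hau : ‖a + u‖ ≤ K * ‖a + a‖ := hK.2 _ _ h₀ h₁
  calc ‖u‖ = ‖(a + u) - a‖ := by rw [add_sub_cancel_left]
    _ ≤ ‖a + u‖ + ‖a‖ := norm_sub_le _ _
    _ ≤ K * (‖a‖ + ‖a‖) + ‖a‖ := by
        gcongr
        exact hau.trans (mul_le_mul_of_nonneg_left (norm_add_le a a) hK.1.le)
    _ = (2 * K + 1) * ‖a‖ := by ring

namespace IsConeMetric

variable {E : Type*} [NormedAddCommGroup E] [NormedSpace ℝ E] {P : Set E} {M : Type*}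
  {d : M → M → E}

theorem dist_mem (hP : IsCone P) (hd : IsConeMetric P d) (x y : M) : d x y ∈ P := by
  by_cases h : x = y
  · simpa [(hd.2.1 x y).2 h] using hP.zero_mem_s17
  · simpa [ConeLe] using (hd.1 x y h).1

theorem dist_sub_dist_le (hP : IsCone P) (hd : IsConeMetric P d) (s t x y : M) :
    ConeLe P (d s t - d x y) (d s x + d t y) := by
  obtain ⟨-, -, hsymm, htri⟩ := hd
  have := hP.add_mem (htri s t x) (htri x t y)
  unfold ConeLe at this ⊢
  convert this using 1
  rw [hsymm y t]
  abel

theorem neg_le_dist_sub_dist (hP : IsCone P) (hd : IsConeMetric P d) (s t x y : M) :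
    ConeLe P (-(d s x + d t y)) (d s t - d x y) := by
  obtain ⟨-, -, hsymm, htri⟩ := hd
  have := hP.add_mem (htri x y s) (htri s y t)
  unfold ConeLe at this ⊢
  convert this using 1
  rw [hsymm x s]
  abel

theorem norm_dist_sub_dist_le (hP : IsCone P) {K : ℝ} (hK : IsNormalCone P K)
    (hd : IsConeMetric P d) (s t x y : M) :
    ‖d s t - d x y‖ ≤ (2 * K + 1) * (‖d s x‖ + ‖d t y‖) :=
  (hK.norm_le_of_neg_le_of_le (hd.neg_le_dist_sub_dist hP s t x y)
    (hd.dist_sub_dist_le hP s t x y)).trans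
    (mul_le_mul_of_nonneg_left (norm_add_le _ _) (by linarith [hK.1]))

end IsConeMetric

theorem ConeConverges.tendsto_dist_zero {E : Type*} [NormedAddCommGroup E] [NormedSpace ℝ E]
    {P : Set E} (hP : IsCone P) (hPint : (interior P).Nonempty) {K : ℝ}
    (hK : IsNormalCone P K) {M : Type*} {d : M → M → E} (hd : IsConeMetric P d)
    {s : ℕ → M} {x : M} (hx : ConeConverges P d s x) :
    Tendsto (fun n => d (s n) x) atTop (𝓝 0) := by
  rw [NormedAddGroup.tendsto_nhds_zero]
  intro ε hε
  obtain ⟨c, hc, hcε⟩ := hP.exists_mem_interior_norm_lt hPint (div_pos hε hK.1)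
  obtain ⟨n₀, hn₀⟩ := hx c (by simpa [ConeLt] using hc)
  refine eventually_atTop.2 ⟨n₀, fun n hn => ?_⟩
  calc ‖d (s n) x‖ ≤ K * ‖c‖ :=
        hK.2 _ _ (by simpa [ConeLe] using hd.dist_mem hP (s n) x)
          (interior_subset (hn₀ n hn))
    _ < ε := by rwa [lt_div_iff₀' hK.1] at hcε

theorem stmt17
    {E : Type*} [NormedAddCommGroup E] [NormedSpace ℝ E]
    {M : Type*} (P : Set E) (hP : IsCone P) (hPint : (interior P).Nonempty)
    (K : ℝ) (hK : IsNormalCone P K)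
    (d : M → M → E) (hd : IsConeMetric P d)
    (s t : ℕ → M) (x y : M)
    (hx : ConeConverges P d s x) (hy : ConeConverges P d t y) :
    Tendsto (fun n => ‖d (s n) (t n) - d x y‖) atTop (nhds 0) := by
  have hsx := hx.tendsto_dist_zero hP hPint hK hd
  have hty := hy.tendsto_dist_zero hP hPint hK hd
  have hbound : Tendsto (fun n => (2 * K + 1) * (‖d (s n) x‖ + ‖d (t n) y‖)) atTop (𝓝 0) := by
    simpa using (hsx.norm.add hty.norm).const_mul (2 * K + 1)
  exact squeeze_zero (fun n => norm_nonneg _)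
    (fun n => hd.norm_dist_sub_dist_le hP hK (s n) (t n) x y) hbound
end
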